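/- Let F : ℝ^d → ℝ be ℓ-weakly convex with ℓ > 0, let X ⊆ ℝ^d be nonempty, closed and convex, set ρ = 2ℓ and let 0 < η ≤ 1/ρ. Fix x ∈ X, and let g be a square-integrable random vector on a probability space with E[g] ∈ ∂F(x) and E‖g‖² ≤ G_F². Set x⁺ := Π_X(x − η g) and x̂ := prox_{Φ/ρ}(x), where Φ := F + δ_X. Then E‖x⁺ − x̂‖² ≤ (1 − ηρ)‖x − x̂‖² + 4 G_F² η². -/

import Mathlib

open MeasureTheory
open scoped RealInnerProductSpace

noncomputable section

/-- `q` is the Euclidean projection of `p` onto `X`. -/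
def IsProjection {d : ℕ} (X : Set (EuclideanSpace ℝ (Fin d))) (p q : EuclideanSpace ℝ (Fin d)) : Prop :=
  q ∈ X ∧ ∀ y ∈ X, ‖q - p‖ ≤ ‖y - p‖

/-- `F` is `ℓ`-weakly convex: `x ↦ F x + ℓ/2 ‖x‖²` is convex on `ℝ^d`. -/
def WeaklyConvex {d : ℕ} (ℓ : ℝ) (F : EuclideanSpace ℝ (Fin d) → ℝ) : Prop :=
  ConvexOn ℝ Set.univ fun x => F x + ℓ / 2 * ‖x‖ ^ 2

/-- The subdifferential of an `ℓ`-weakly convex function `F` at `x`. -/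
def WCSubdiff {d : ℕ} (ℓ : ℝ) (F : EuclideanSpace ℝ (Fin d) → ℝ) (x : EuclideanSpace ℝ (Fin d)) : Set (EuclideanSpace ℝ (Fin d)) :=
  {g | ∀ y, F x + ⟪g, y - x⟫ - ℓ / 2 * ‖y - x‖ ^ 2 ≤ F y}

/-- `q = prox_{Φ/ρ}(p)`, i.e. `q` minimizes `y ↦ F y + ρ/2 ‖y - p‖²` over `X`. -/
def IsProx {d : ℕ} (X : Set (EuclideanSpace ℝ (Fin d))) (F : EuclideanSpace ℝ (Fin d) → ℝ) (ρ : ℝ) (p q : EuclideanSpace ℝ (Fin d)) : Prop :=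
  q ∈ X ∧ ∀ y ∈ X, F q + ρ / 2 * ‖q - p‖ ^ 2 ≤ F y + ρ / 2 * ‖y - p‖ ^ 2

/-!
The projection onto a closed convex set is nonexpansive and fixes `x̂ ∈ X`, so
`‖x⁺ - x̂‖² ≤ ‖(x - x̂) - η g‖²`; taking expectations turns the cross term into
`-2η ⟪x - x̂, E g⟫`. The prox objective `F + ρ/2 ‖· - x‖²` is `(ρ - ℓ)`-strongly convex and
minimized over `X` at `x̂`, whence `F x̂ + (ρ - ℓ/2) ‖x̂ - x‖² ≤ F x`; combined with the weak
subgradient inequality for `E g` at `x̂` this gives `⟪E g, x - x̂⟫ ≥ (ρ - ℓ) ‖x - x̂‖²`, which for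
`ρ = 2ℓ` is exactly the contraction `1 - ηρ`.
-/

section InnerProductSpace

variable {E : Type*} [NormedAddCommGroup E] [InnerProductSpace ℝ E]

theorem norm_sub_smul_add_smul_sq (a b : E) (t : ℝ) :
    ‖(1 - t) • a + t • b‖ ^ 2 =
      (1 - t) * ‖a‖ ^ 2 + t * ‖b‖ ^ 2 - t * (1 - t) * ‖a - b‖ ^ 2 := by
  simp only [← real_inner_self_eq_norm_sq, real_inner_add_add_self, real_inner_sub_sub_self,
    real_inner_smul_left, real_inner_smul_right]
  ring

theorem integral_norm_sub_smul_sq [CompleteSpace E] {Ω : Type*} [MeasurableSpace Ω]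
    {μ : Measure Ω} [IsProbabilityMeasure μ] {g : Ω → E} (hg : MemLp g 2 μ) (a : E) (η : ℝ) :
    ∫ ω, ‖a - η • g ω‖ ^ 2 ∂μ =
      ‖a‖ ^ 2 - 2 * η * ⟪a, ∫ ω, g ω ∂μ⟫ + η ^ 2 * ∫ ω, ‖g ω‖ ^ 2 ∂μ := by
  have hg₁ : Integrable g μ := hg.integrable one_le_two
  have hinner : Integrable (fun ω => 2 * η * ⟪a, g ω⟫) μ := (hg₁.const_inner a).const_mul _
  have hsq : Integrable (fun ω => η ^ 2 * ‖g ω‖ ^ 2) μ := hg.norm.integrable_sq.const_mul _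
  have hexpand : ∀ ω, ‖a - η • g ω‖ ^ 2 = ‖a‖ ^ 2 - 2 * η * ⟪a, g ω⟫ + η ^ 2 * ‖g ω‖ ^ 2 := by
    intro ω
    rw [norm_sub_sq_real, real_inner_smul_right, norm_smul, mul_pow, Real.norm_eq_abs, sq_abs]
    ring
  simp_rw [hexpand]
  have hlin : Integrable (fun ω => ‖a‖ ^ 2 - 2 * η * ⟪a, g ω⟫) μ := (integrable_const _).sub hinner
  rw [integral_add hlin hsq, integral_sub (integrable_const _) hinner,
    integral_const, integral_const_mul, integral_const_mul, integral_inner hg₁]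
  simp

end InnerProductSpace

section Projection

variable {d : ℕ} {X : Set (EuclideanSpace ℝ (Fin d))}

theorem isProjection_iff_norm_eq_iInf {p q : EuclideanSpace ℝ (Fin d)} (hq : q ∈ X) :
    IsProjection X p q ↔ ‖p - q‖ = ⨅ w : X, ‖p - w‖ := by
  have : Nonempty X := ⟨⟨q, hq⟩⟩
  have hbdd : BddBelow (Set.range fun w : X => ‖p - w‖) :=
    ⟨0, by rintro _ ⟨w, rfl⟩; exact norm_nonneg _⟩
  constructor
  · intro h
    refine le_antisymm (le_ciInf fun w => ?_) (ciInf_le hbdd ⟨q, hq⟩)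
    rw [norm_sub_rev p, norm_sub_rev p]
    exact h.2 w w.2
  · intro h
    refine ⟨hq, fun y hy => ?_⟩
    rw [norm_sub_rev q, norm_sub_rev y, h]
    exact ciInf_le hbdd ⟨y, hy⟩

namespace IsProjection

variable {p q : EuclideanSpace ℝ (Fin d)}

theorem inner_sub_nonpos (hX : Convex ℝ X) (h : IsProjection X p q)
    {y : EuclideanSpace ℝ (Fin d)} (hy : y ∈ X) : ⟪p - q, y - q⟫ ≤ 0 :=
  (norm_eq_iInf_iff_real_inner_le_zero hX h.1).mp ((isProjection_iff_norm_eq_iInf h.1).mp h) y hy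

theorem norm_sub_le (hX : Convex ℝ X) (h : IsProjection X p q)
    {y : EuclideanSpace ℝ (Fin d)} (hy : y ∈ X) : ‖q - y‖ ≤ ‖p - y‖ := by
  have hexpand : ‖p - y‖ ^ 2 = ‖p - q‖ ^ 2 - 2 * ⟪p - q, y - q⟫ + ‖q - y‖ ^ 2 := by
    rw [show p - y = (p - q) - (y - q) by abel, norm_sub_sq_real, norm_sub_rev y q]
  have hobtuse := h.inner_sub_nonpos hX hy
  exact pow_le_pow_iff_left₀ (norm_nonneg _) (norm_nonneg _) two_ne_zero |>.mp
    (by nlinarith [sq_nonneg ‖p - q‖])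

theorem norm_sub_le_norm_sub (hX : Convex ℝ X) {p' q' : EuclideanSpace ℝ (Fin d)}
    (h : IsProjection X p q) (h' : IsProjection X p' q') : ‖q - q'‖ ≤ ‖p - p'‖ := by
  have hq := h.inner_sub_nonpos hX h'.1
  have hq' := h'.inner_sub_nonpos hX h.1
  have hsplit : ⟪p - p', q - q'⟫ = ‖q - q'‖ ^ 2 - ⟪p - q, q' - q⟫ - ⟪p' - q', q - q'⟫ := by
    rw [← real_inner_self_eq_norm_sq, show q' - q = -(q - q') by abel, inner_neg_right,
      sub_neg_eq_add, ← inner_add_left, ← inner_sub_left]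
    congr 1
    abel
  have hcs := real_inner_le_norm (p - p') (q - q')
  nlinarith [norm_nonneg (q - q'), norm_nonneg (p - p')]

theorem eq (hX : Convex ℝ X) {q' : EuclideanSpace ℝ (Fin d)} (h : IsProjection X p q)
    (h' : IsProjection X p q') : q = q' := by
  simpa [sub_eq_zero] using h.norm_sub_le_norm_sub hX h'

end IsProjection

theorem exists_lipschitzWith_isProjection (hXne : X.Nonempty) (hXcl : IsClosed X)
    (hXcvx : Convex ℝ X) :
    ∃ P : EuclideanSpace ℝ (Fin d) → EuclideanSpace ℝ (Fin d),
      LipschitzWith 1 P ∧ ∀ p, IsProjection X p (P p) := by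
  have hex : ∀ p, ∃ q, IsProjection X p q := fun p => by
    obtain ⟨q, hq, hmin⟩ := exists_norm_eq_iInf_of_complete_convex hXne hXcl.isComplete hXcvx p
    exact ⟨q, (isProjection_iff_norm_eq_iInf hq).mpr hmin⟩
  choose P hP using hex
  refine ⟨P, LipschitzWith.of_dist_le_mul fun p p' => ?_, hP⟩
  simpa [dist_eq_norm] using (hP p).norm_sub_le_norm_sub hXcvx (hP p')

theorem aestronglyMeasurable_of_isProjection (hXne : X.Nonempty) (hXcl : IsClosed X)
    (hXcvx : Convex ℝ X) {Ω : Type*} [MeasurableSpace Ω] {μ : Measure Ω}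
    {f q : Ω → EuclideanSpace ℝ (Fin d)} (hf : AEStronglyMeasurable f μ)
    (hq : ∀ ω, IsProjection X (f ω) (q ω)) : AEStronglyMeasurable q μ := by
  obtain ⟨P, hPlip, hP⟩ := exists_lipschitzWith_isProjection hXne hXcl hXcvx
  have : q = P ∘ f := funext fun ω => (hq ω).eq hXcvx (hP (f ω))
  exact this ▸ hPlip.continuous.comp_aestronglyMeasurable hf

end Projection

section WeakConvexity

variable {d : ℕ} {ℓ : ℝ} {F : EuclideanSpace ℝ (Fin d) → ℝ}

theorem WeaklyConvex.apply_combo_le (hF : WeaklyConvex ℓ F) (a b : EuclideanSpace ℝ (Fin d))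
    {t : ℝ} (ht₀ : 0 ≤ t) (ht₁ : t ≤ 1) :
    F ((1 - t) • a + t • b) ≤ (1 - t) * F a + t * F b + ℓ / 2 * (t * (1 - t)) * ‖a - b‖ ^ 2 := by
  have h := hF.2 (Set.mem_univ a) (Set.mem_univ b) (sub_nonneg.mpr ht₁) ht₀ (by ring)
  simp only [smul_eq_mul, norm_sub_smul_add_smul_sq] at h
  linarith

variable {X : Set (EuclideanSpace ℝ (Fin d))} {ρ : ℝ} {x xhat : EuclideanSpace ℝ (Fin d)}

theorem IsProx.apply_add_le (hX : Convex ℝ X) (hF : WeaklyConvex ℓ F) (hx : x ∈ X)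
    (h : IsProx X F ρ x xhat) : F xhat + (ρ - ℓ / 2) * ‖xhat - x‖ ^ 2 ≤ F x := by
  set S := ‖xhat - x‖ ^ 2
  -- test the minimality of `xhat` against the segment towards `x`, then let `t → 0⁺`
  have hseg : ∀ t ∈ Set.Ioc (0 : ℝ) 1,
      F xhat + (ρ - ℓ / 2) * S ≤ F x + t * ((ρ - ℓ) / 2 * S) := by
    rintro t ⟨ht₀, ht₁⟩
    have hmin := h.2 _ (hX h.1 hx (sub_nonneg.mpr ht₁) ht₀.le (by ring))
    have hdist : ‖(1 - t) • xhat + t • x - x‖ ^ 2 = (1 - t) ^ 2 * S := by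
      rw [show (1 - t) • xhat + t • x - x = (1 - t) • (xhat - x) by module, norm_smul, mul_pow,
        Real.norm_eq_abs, sq_abs]
    have hwc := hF.apply_combo_le xhat x ht₀.le ht₁
    rw [hdist] at hmin
    refine le_of_mul_le_mul_left ?_ ht₀
    linear_combination hmin + hwc
  have hlim : Filter.Tendsto (fun t : ℝ => F x + t * ((ρ - ℓ) / 2 * S)) (nhdsWithin 0 (Set.Ioi 0))
      (nhds (F x)) := by
    exact ((continuous_const.add (continuous_id.mul continuous_const)).tendsto' 0 (F x)
      (by simp)).mono_left nhdsWithin_le_nhds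
  exact ge_of_tendsto hlim (Filter.eventually_of_mem (Ioc_mem_nhdsGT one_pos) hseg)

theorem IsProx.mul_norm_sq_le_inner (hX : Convex ℝ X) (hF : WeaklyConvex ℓ F) (hx : x ∈ X)
    (h : IsProx X F ρ x xhat) {v : EuclideanSpace ℝ (Fin d)} (hv : v ∈ WCSubdiff ℓ F x) :
    (ρ - ℓ) * ‖x - xhat‖ ^ 2 ≤ ⟪v, x - xhat⟫ := by
  have hgrowth := h.apply_add_le hX hF hx
  have hsub := hv xhat
  rw [show xhat - x = -(x - xhat) by abel, inner_neg_right, norm_neg] at hsub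
  rw [norm_sub_rev] at hgrowth
  linarith

end WeakConvexity

theorem sgm_one_step_contraction_general {d : ℕ}
    {Ω : Type} [MeasurableSpace Ω] (μ : Measure Ω) [IsProbabilityMeasure μ]
    (X : Set (EuclideanSpace ℝ (Fin d))) (hXcl : IsClosed X) (hXcvx : Convex ℝ X)
    (F : EuclideanSpace ℝ (Fin d) → ℝ) (ℓ ρ η GF : ℝ) (hρ : ρ = 2 * ℓ)
    (hη0 : 0 < η)
    (hWC : WeaklyConvex ℓ F)
    (x : EuclideanSpace ℝ (Fin d)) (hx : x ∈ X)
    (g : Ω → EuclideanSpace ℝ (Fin d)) (hg2 : MemLp g 2 μ)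
    (hmean : (∫ ω, g ω ∂μ) ∈ WCSubdiff ℓ F x)
    (hGF : (∫ ω, ‖g ω‖ ^ 2 ∂μ) ≤ GF ^ 2)
    (xplus : Ω → EuclideanSpace ℝ (Fin d)) (hxplus : ∀ ω, IsProjection X (x - η • g ω) (xplus ω))
    (xhat : EuclideanSpace ℝ (Fin d)) (hxhat : IsProx X F ρ x xhat) :
    (∫ ω, ‖xplus ω - xhat‖ ^ 2 ∂μ) ≤ (1 - η * ρ) * ‖x - xhat‖ ^ 2 + 4 * GF ^ 2 * η ^ 2 := by
  have hstep : ∀ ω, ‖xplus ω - xhat‖ ≤ ‖(x - xhat) - η • g ω‖ := fun ω => by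
    simpa only [sub_right_comm] using (hxplus ω).norm_sub_le hXcvx hxhat.1
  have hmeas : AEStronglyMeasurable xplus μ :=
    aestronglyMeasurable_of_isProjection ⟨x, hx⟩ hXcl hXcvx
      (aestronglyMeasurable_const.sub (hg2.1.const_smul η)) hxplus
  have hmem : MemLp (fun ω => (x - xhat) - η • g ω) 2 μ := (memLp_const _).sub (hg2.const_smul η)
  have hint : Integrable (fun ω => ‖xplus ω - xhat‖ ^ 2) μ :=
    (hmem.of_le (hmeas.sub aestronglyMeasurable_const) (ae_of_all _ hstep)).norm.integrable_sq
  have hdescent := hxhat.mul_norm_sq_le_inner hXcvx hWC hx hmean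
  calc (∫ ω, ‖xplus ω - xhat‖ ^ 2 ∂μ) ≤ ∫ ω, ‖(x - xhat) - η • g ω‖ ^ 2 ∂μ :=
        integral_mono hint hmem.norm.integrable_sq
          fun ω => pow_le_pow_left₀ (norm_nonneg _) (hstep ω) 2
    _ = ‖x - xhat‖ ^ 2 - 2 * η * ⟪x - xhat, ∫ ω, g ω ∂μ⟫ + η ^ 2 * ∫ ω, ‖g ω‖ ^ 2 ∂μ :=
        integral_norm_sub_smul_sq hg2 _ _
    _ ≤ (1 - η * ρ) * ‖x - xhat‖ ^ 2 + 4 * GF ^ 2 * η ^ 2 := by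
        rw [real_inner_comm]
        subst hρ
        nlinarith [mul_le_mul_of_nonneg_left hdescent hη0.le,
          mul_le_mul_of_nonneg_left hGF (sq_nonneg η), sq_nonneg η, sq_nonneg GF]

/-- Lemma 4.1 (Lemma 3.3 in Davis--Drusvyatskiy): one-step contraction of the stochastic
subgradient step towards the proximal point. -/
theorem sgm_one_step_contraction {d : ℕ}
    {Ω : Type} [MeasurableSpace Ω] (μ : Measure Ω) [IsProbabilityMeasure μ]
    (X : Set (EuclideanSpace ℝ (Fin d))) (hXne : X.Nonempty) (hXcl : IsClosed X) (hXcvx : Convex ℝ X)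
    (F : EuclideanSpace ℝ (Fin d) → ℝ) (ℓ ρ η GF : ℝ) (hℓ : 0 < ℓ) (hρ : ρ = 2 * ℓ)
    (hη0 : 0 < η) (hη : η ≤ 1 / ρ)
    (hWC : WeaklyConvex ℓ F)
    (x : EuclideanSpace ℝ (Fin d)) (hx : x ∈ X)
    (g : Ω → EuclideanSpace ℝ (Fin d)) (hg2 : MemLp g 2 μ)
    (hmean : (∫ ω, g ω ∂μ) ∈ WCSubdiff ℓ F x)
    (hGF : (∫ ω, ‖g ω‖ ^ 2 ∂μ) ≤ GF ^ 2)
    (xplus : Ω → EuclideanSpace ℝ (Fin d)) (hxplus : ∀ ω, IsProjection X (x - η • g ω) (xplus ω))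
    (xhat : EuclideanSpace ℝ (Fin d)) (hxhat : IsProx X F ρ x xhat) :
    (∫ ω, ‖xplus ω - xhat‖ ^ 2 ∂μ) ≤ (1 - η * ρ) * ‖x - xhat‖ ^ 2 + 4 * GF ^ 2 * η ^ 2 :=
  sgm_one_step_contraction_general μ X hXcl hXcvx F ℓ ρ η GF hρ hη0 hWC x hx g hg2 hmean hGF xplus
    hxplus xhat hxhat
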